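/- arXiv:1803.03020 — 4 statements merged into one kernel-verified Lean document; each statement's English description precedes it below -/
import Mathlib

section
/- Let f be analytic in a neighborhood of the closed unit disk with f(0)=0. Then for each k ≥ 0, the moment M_k = (1/(2πi)) ∫_D f(ζ)^k |f'(ζ)|² dζ̄ dζ equals the boundary integral (1/(2πi)) ∮_{∂D} f(ζ)^k f*(ζ) f'(ζ) dζ, where f*(ζ) = conj(f(1/ζ̄)). -/
/-!
In polar coordinates `ζ = r e^{iθ}` the form `g ζ * conj (h ζ) dζ` reads `B dr + i r B dθ` with
`B = e^{iθ} g conj h`. Since `g` is holomorphic and `conj h` antiholomorphic, its exterior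
derivative is `(∂ᵣ (i r B) - ∂_θ B) dr ∧ dθ = 2 i r g conj h' dr ∧ dθ`. Integrating over the
rectangle `[0, R] × [0, 2π]` (the `dθ`-term vanishes at `r = 0` and the two `θ`-edges cancel by
periodicity) gives the Green formula `∮_{|ζ| = R} g conj h dζ = 2i ∫_{|ζ| < R} g conj h' dA`.
Take `g = f^k f'` and `h = f`: on the unit circle `1 / conj ζ = ζ`, so `f* = conj f` there, and
`|f'|² = f' conj f'`.
-/

open Complex MeasureTheory Metric Set
open scoped Real ComplexConjugate

section PolarCoordinates

variable {E : Type*} [NormedAddCommGroup E] [NormedSpace ℝ E]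

theorem intervalIntegral_integral_swap_of_continuousOn {f : ℝ → ℝ → E} {a b c d : ℝ}
    (hab : a ≤ b) (hcd : c ≤ d) (hf : ContinuousOn (Function.uncurry f) (Icc a b ×ˢ Icc c d)) :
    ∫ x in a..b, ∫ y in c..d, f x y = ∫ y in c..d, ∫ x in a..b, f x y := by
  simp only [intervalIntegral.integral_of_le hab, intervalIntegral.integral_of_le hcd]
  refine integral_integral_swap ?_
  rw [Measure.prod_restrict, ← Measure.volume_eq_prod]
  exact (hf.integrableOn_compact (isCompact_Icc.prod isCompact_Icc)).mono_set
    (prod_mono Ioc_subset_Icc_self Ioc_subset_Icc_self)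

lemma continuous_circleMap_uncurry (c : ℂ) :
    Continuous fun p : ℝ × ℝ => circleMap c p.1 p.2 := by
  unfold circleMap
  fun_prop

lemma ContinuousOn.comp_circleMap_uncurry {X : Type*} [TopologicalSpace X] {u : ℂ → X} {R : ℝ}
    (hu : ContinuousOn u (closedBall 0 R)) :
    ContinuousOn (fun p : ℝ × ℝ => u (circleMap 0 p.1 p.2)) (Icc 0 R ×ˢ univ) := by
  refine hu.comp (continuous_circleMap_uncurry 0).continuousOn ?_
  rintro ⟨r, θ⟩ ⟨⟨hr0, hrR⟩, -⟩
  simpa [abs_of_nonneg hr0] using hrR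

lemma polarCoord_symm_eq_circleMap (p : ℝ × ℝ) :
    Complex.polarCoord.symm p = circleMap 0 p.1 p.2 := by
  rw [Complex.polarCoord_symm_apply, circleMap_zero, Complex.exp_mul_I]
  push_cast
  ring

theorem integral_ball_eq_intervalIntegral_circleMap {Q : ℂ → E} {R : ℝ} (hR : 0 ≤ R)
    (hQ : ContinuousOn Q (closedBall 0 R)) :
    ∫ z in ball 0 R, Q z = ∫ r in (0 : ℝ)..R, r • ∫ θ in (0 : ℝ)..2 * π, Q (circleMap 0 r θ) := by
  have hpolar : ∀ p ∈ polarCoord.target,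
      p.1 • (ball 0 R).indicator Q (Complex.polarCoord.symm p) =
        (Iio R ×ˢ univ).indicator (fun p : ℝ × ℝ => p.1 • Q (circleMap 0 p.1 p.2)) p := by
    rintro ⟨r, θ⟩ ⟨hr, -⟩
    simp only [polarCoord_symm_eq_circleMap, indicator, mem_ball_zero_iff, norm_circleMap_zero,
      abs_of_pos (show 0 < r from hr), mem_prod, mem_Iio, mem_univ, and_true]
    split_ifs <;> simp
  have hmeas : MeasurableSet (Iio R ×ˢ (univ : Set ℝ)) := measurableSet_Iio.prod .univ
  have hset : Iio R ×ˢ univ ∩ polarCoord.target = Ioo 0 R ×ˢ Ioo (-π) π := by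
    ext ⟨r, θ⟩
    simp [polarCoord_target]
    tauto
  have hint : IntegrableOn (fun p : ℝ × ℝ => p.1 • Q (circleMap 0 p.1 p.2))
      (Icc 0 R ×ˢ Icc (-π) π) (volume.prod volume) := by
    rw [← Measure.volume_eq_prod]
    exact ContinuousOn.integrableOn_compact (isCompact_Icc.prod isCompact_Icc) <|
      continuous_fst.continuousOn.smul <|
        hQ.comp_circleMap_uncurry.mono (prod_mono_right (subset_univ _))
  rw [← integral_indicator measurableSet_ball, ← Complex.integral_comp_polarCoord_symm,
    setIntegral_congr_fun polarCoord.open_target.measurableSet hpolar, integral_indicator hmeas,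
    Measure.restrict_restrict hmeas, hset, Measure.volume_eq_prod,
    setIntegral_prod _ (hint.mono_set (prod_mono Ioo_subset_Icc_self Ioo_subset_Icc_self)),
    intervalIntegral.integral_of_le hR, ← integral_Ioc_eq_integral_Ioo]
  refine setIntegral_congr_fun measurableSet_Ioc fun r _ => ?_
  have hper : Function.Periodic (fun θ => Q (circleMap 0 r θ)) (2 * π) := fun θ => by
    simp only [periodic_circleMap 0 r θ]
  have hshift := hper.intervalIntegral_add_eq (-π) 0
  rw [neg_add_eq_sub, show 2 * π - π = π by ring, zero_add] at hshift
  rw [integral_smul, ← integral_Ioc_eq_integral_Ioo,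
    ← intervalIntegral.integral_of_le (by linarith [Real.pi_pos]), ← hshift]

end PolarCoordinates

lemma hasDerivAt_mul_conj_comp {g h : ℂ → ℂ} {γ : ℝ → ℂ} {γ' : ℂ} {t : ℝ}
    (hγ : HasDerivAt γ γ' t) (hg : DifferentiableAt ℂ g (γ t)) (hh : DifferentiableAt ℂ h (γ t)) :
    HasDerivAt (fun s => g (γ s) * conj (h (γ s)))
      (deriv g (γ t) * γ' * conj (h (γ t)) + g (γ t) * conj (deriv h (γ t) * γ')) t :=
  (hg.hasDerivAt.comp (𝕜' := ℂ) t hγ).mul (hh.hasDerivAt.comp (𝕜' := ℂ) t hγ).star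

lemma exp_mul_I_mul_conj (θ : ℝ) : exp (θ * I) * conj (exp (θ * I)) = 1 := by
  rw [← exp_conj, ← exp_add]
  simp

section GreenFormula

variable (g h : ℂ → ℂ)

/-- In polar coordinates, `g ζ * conj (h ζ) dζ = B dr + I * r * B dθ` with
`B r θ = polarFormCoeff g h r θ`. -/
noncomputable def polarFormCoeff (r θ : ℝ) : ℂ :=
  exp (θ * I) * (g (circleMap 0 r θ) * conj (h (circleMap 0 r θ)))

noncomputable def polarFormCoeffDerivAngle (r θ : ℝ) : ℂ :=
  I * polarFormCoeff g h r θ +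
    I * r * exp (θ * I) ^ 2 * (deriv g (circleMap 0 r θ) * conj (h (circleMap 0 r θ))) -
    I * r * (g (circleMap 0 r θ) * conj (deriv h (circleMap 0 r θ)))

variable {g h} {R : ℝ}

lemma hasDerivAt_polarFormCoeff_angle {r : ℝ} (θ : ℝ) (hr : |r| ≤ R)
    (hg : AnalyticOnNhd ℂ g (closedBall 0 R)) (hh : AnalyticOnNhd ℂ h (closedBall 0 R)) :
    HasDerivAt (polarFormCoeff g h r) (polarFormCoeffDerivAngle g h r θ) θ := by
  have hz : circleMap 0 r θ ∈ closedBall 0 R := by simpa using hr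
  have he : HasDerivAt (fun t : ℝ => exp (t * I)) (exp (θ * I) * I) θ := by
    simpa using ((hasDerivAt_id θ).ofReal_comp.mul_const I).cexp
  refine (he.mul (hasDerivAt_mul_conj_comp (hasDerivAt_circleMap 0 r θ)
    (hg _ hz).differentiableAt (hh _ hz).differentiableAt)).congr_deriv ?_
  simp only [polarFormCoeffDerivAngle, polarFormCoeff, circleMap_zero, map_mul, conj_I, conj_ofReal]
  linear_combination (-I * r * g (r * exp (θ * I)) * conj (deriv h (r * exp (θ * I)))) *
    exp_mul_I_mul_conj θ

lemma hasDerivAt_polarFormCoeff_radius {r : ℝ} (θ : ℝ) (hr : |r| ≤ R)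
    (hg : AnalyticOnNhd ℂ g (closedBall 0 R)) (hh : AnalyticOnNhd ℂ h (closedBall 0 R)) :
    HasDerivAt (fun s : ℝ => I * s * polarFormCoeff g h s θ)
      (polarFormCoeffDerivAngle g h r θ +
        2 * I * r * (g (circleMap 0 r θ) * conj (deriv h (circleMap 0 r θ)))) r := by
  have hz : circleMap 0 r θ ∈ closedBall 0 R := by simpa using hr
  have hγ : HasDerivAt (fun s : ℝ => circleMap 0 s θ) (exp (θ * I)) r := by
    simpa [circleMap_zero] using (hasDerivAt_id r).ofReal_comp.mul_const (exp (θ * I))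
  refine (((hasDerivAt_id r).ofReal_comp.const_mul I).mul
    ((hasDerivAt_mul_conj_comp hγ (hg _ hz).differentiableAt
      (hh _ hz).differentiableAt).const_mul (exp (θ * I)))).congr_deriv ?_
  simp only [polarFormCoeffDerivAngle, polarFormCoeff, circleMap_zero, map_mul, id, ofReal_one]
  linear_combination (I * r * g (r * exp (θ * I)) * conj (deriv h (r * exp (θ * I)))) *
    exp_mul_I_mul_conj θ

lemma continuousOn_polarFormCoeffDerivAngle
    (hg : AnalyticOnNhd ℂ g (closedBall 0 R)) (hh : AnalyticOnNhd ℂ h (closedBall 0 R)) :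
    ContinuousOn (fun p : ℝ × ℝ => polarFormCoeffDerivAngle g h p.1 p.2) (Icc 0 R ×ˢ univ) := by
  have cg := hg.continuousOn.comp_circleMap_uncurry
  have ch := (continuous_star.comp_continuousOn hh.continuousOn).comp_circleMap_uncurry
  have cg' := hg.deriv.continuousOn.comp_circleMap_uncurry
  have ch' := (continuous_star.comp_continuousOn hh.deriv.continuousOn).comp_circleMap_uncurry
  have ce : ContinuousOn (fun p : ℝ × ℝ => exp (p.2 * I)) (Icc 0 R ×ˢ univ) := by fun_prop
  have cr : ContinuousOn (fun p : ℝ × ℝ => I * p.1) (Icc 0 R ×ˢ univ) := by fun_prop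
  exact ((continuousOn_const.mul (ce.mul (cg.mul ch))).add
    ((cr.mul (ce.pow 2)).mul (cg'.mul ch))).sub (cr.mul (cg.mul ch'))

lemma continuous_polarFormCoeffDerivAngle {r : ℝ} (hr : r ∈ Icc 0 R)
    (hg : AnalyticOnNhd ℂ g (closedBall 0 R)) (hh : AnalyticOnNhd ℂ h (closedBall 0 R)) :
    Continuous (polarFormCoeffDerivAngle g h r) :=
  (continuousOn_polarFormCoeffDerivAngle hg hh).comp_continuous (f := fun θ : ℝ => (r, θ))
    (by fun_prop) fun θ => ⟨hr, mem_univ θ⟩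

lemma periodic_polarFormCoeff (r : ℝ) : Function.Periodic (polarFormCoeff g h r) (2 * π) := by
  intro θ
  simp only [polarFormCoeff, periodic_circleMap 0 r θ, ofReal_add, add_mul, exp_add, ofReal_mul,
    ofReal_ofNat, exp_two_pi_mul_I, mul_one]

lemma integral_polarFormCoeffDerivAngle {r : ℝ} (hr : r ∈ Icc 0 R)
    (hg : AnalyticOnNhd ℂ g (closedBall 0 R)) (hh : AnalyticOnNhd ℂ h (closedBall 0 R)) :
    ∫ θ in (0 : ℝ)..2 * π, polarFormCoeffDerivAngle g h r θ = 0 := by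
  have hr' : |r| ≤ R := by rw [abs_of_nonneg hr.1]; exact hr.2
  rw [intervalIntegral.integral_eq_sub_of_hasDerivAt
    (fun θ _ => hasDerivAt_polarFormCoeff_angle θ hr' hg hh)
    ((continuous_polarFormCoeffDerivAngle hr hg hh).intervalIntegrable _ _), sub_eq_zero]
  simpa using periodic_polarFormCoeff r 0

theorem circleIntegral_mul_conj_eq_integral_ball (hR : 0 ≤ R)
    (hg : AnalyticOnNhd ℂ g (closedBall 0 R)) (hh : AnalyticOnNhd ℂ h (closedBall 0 R)) :
    ∮ ζ in C(0, R), g ζ * conj (h ζ) = 2 * I * ∫ ζ in ball 0 R, g ζ * conj (deriv h ζ) := by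
  set Q : ℂ → ℂ := fun ζ => g ζ * conj (deriv h ζ)
  have hQ : ContinuousOn Q (closedBall 0 R) :=
    hg.continuousOn.mul (continuous_star.comp_continuousOn hh.deriv.continuousOn)
  set D : ℝ → ℝ → ℂ := fun r θ =>
    polarFormCoeffDerivAngle g h r θ + 2 * I * r * Q (circleMap 0 r θ)
  have hD : ContinuousOn (fun p : ℝ × ℝ => D p.1 p.2) (Icc 0 R ×ˢ univ) :=
    (continuousOn_polarFormCoeffDerivAngle hg hh).add
      ((continuousOn_const.mul (by fun_prop)).mul hQ.comp_circleMap_uncurry)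
  calc ∮ ζ in C(0, R), g ζ * conj (h ζ)
      = ∫ θ in (0 : ℝ)..2 * π, I * R * polarFormCoeff g h R θ := by
        rw [circleIntegral]
        refine intervalIntegral.integral_congr fun θ _ => ?_
        simp only [deriv_circleMap, polarFormCoeff, circleMap_zero, smul_eq_mul]
        ring
    _ = ∫ θ in (0 : ℝ)..2 * π, ∫ r in (0 : ℝ)..R, D r θ := by
        refine intervalIntegral.integral_congr fun θ _ => ?_
        have hDθ : ContinuousOn (fun r => D r θ) (Icc 0 R) :=
          hD.comp (f := fun r : ℝ => (r, θ)) (by fun_prop) fun r hr => ⟨hr, mem_univ θ⟩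
        rw [intervalIntegral.integral_eq_sub_of_hasDerivAt
          (f := fun r : ℝ => I * r * polarFormCoeff g h r θ) (fun r hr => ?_)
          (hDθ.intervalIntegrable_of_Icc hR)]
        · simp
        · rw [uIcc_of_le hR] at hr
          exact hasDerivAt_polarFormCoeff_radius θ (by rw [abs_of_nonneg hr.1]; exact hr.2) hg hh
    _ = ∫ r in (0 : ℝ)..R, ∫ θ in (0 : ℝ)..2 * π, D r θ :=
        (intervalIntegral_integral_swap_of_continuousOn hR Real.two_pi_pos.le
          (hD.mono (prod_mono_right (subset_univ _)))).symm
    _ = ∫ r in (0 : ℝ)..R, 2 * I * (r • ∫ θ in (0 : ℝ)..2 * π, Q (circleMap 0 r θ)) := by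
        refine intervalIntegral.integral_congr fun r hr => ?_
        rw [uIcc_of_le hR] at hr
        have hQr : Continuous fun θ => Q (circleMap 0 r θ) :=
          hQ.comp_continuous (continuous_circleMap 0 r) fun θ => by
            simpa [abs_of_nonneg hr.1] using hr.2
        rw [intervalIntegral.integral_add
            ((continuous_polarFormCoeffDerivAngle hr hg hh).intervalIntegrable _ _)
            ((hQr.intervalIntegrable _ _).const_mul _),
          integral_polarFormCoeffDerivAngle hr hg hh, zero_add, intervalIntegral.integral_const_mul,
          real_smul]
        ring
    _ = 2 * I * ∫ ζ in ball 0 R, Q ζ := by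
        rw [intervalIntegral.integral_const_mul, integral_ball_eq_intervalIntegral_circleMap hR hQ]

end GreenFormula

lemma one_div_conj_eq_self_of_norm_eq_one {ζ : ℂ} (hζ : ‖ζ‖ = 1) : 1 / conj ζ = ζ := by
  rw [one_div, inv_eq_conj (by rwa [norm_conj]), conj_conj]

theorem stmt_0_general (f : ℂ → ℂ) (hf : AnalyticOnNhd ℂ f (closedBall 0 1)) (k : ℕ) :
    (π : ℂ)⁻¹ * ∫ ζ in ball (0 : ℂ) 1, f ζ ^ k * (((‖deriv f ζ‖ : ℝ) : ℂ)) ^ 2 =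
      (2 * π * Complex.I)⁻¹ *
        ∮ ζ in C(0, 1), f ζ ^ k * (starRingEnd ℂ) (f (1 / (starRingEnd ℂ) ζ)) * deriv f ζ := by
  have harea : ∫ ζ in ball (0 : ℂ) 1, f ζ ^ k * (((‖deriv f ζ‖ : ℝ) : ℂ)) ^ 2 =
      ∫ ζ in ball (0 : ℂ) 1, f ζ ^ k * deriv f ζ * conj (deriv f ζ) := by
    simp only [mul_assoc, mul_conj']
  have hboundary :
      ∮ ζ in C(0, 1), f ζ ^ k * (starRingEnd ℂ) (f (1 / (starRingEnd ℂ) ζ)) * deriv f ζ =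
        ∮ ζ in C(0, 1), f ζ ^ k * deriv f ζ * conj (f ζ) :=
    circleIntegral.integral_congr zero_le_one fun ζ hζ => by
      rw [one_div_conj_eq_self_of_norm_eq_one (by simpa using hζ)]
      ring
  have hg : AnalyticOnNhd ℂ (fun ζ => f ζ ^ k * deriv f ζ) (closedBall 0 1) :=
    (hf.pow k).mul hf.deriv
  rw [harea, hboundary, circleIntegral_mul_conj_eq_integral_ball zero_le_one hg hf]
  field_simp

/-- For `f` analytic in a neighborhood of the closed unit disk with `f 0 = 0`,
the area-integral moment `(1/(2πi)) ∫_D f^k |f'|² dζ̄ dζ = (1/π) ∫_D f^k |f'|² dA`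
equals the boundary integral `(1/(2πi)) ∮_{∂D} f^k f* f' dζ`, where
`f*(ζ) = conj (f (1/conj ζ))`. -/
theorem stmt_0 (f : ℂ → ℂ) (hf : AnalyticOnNhd ℂ f (closedBall 0 1))
    (h0 : f 0 = 0) (k : ℕ) :
    (π : ℂ)⁻¹ * ∫ ζ in ball (0 : ℂ) 1, f ζ ^ k * (((‖deriv f ζ‖ : ℝ) : ℂ)) ^ 2 =
      (2 * π * Complex.I)⁻¹ *
        ∮ ζ in C(0, 1), f ζ ^ k * (starRingEnd ℂ) (f (1 / (starRingEnd ℂ) ζ)) * deriv f ζ :=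
  stmt_0_general f hf k
end

section
/- Let f(ζ) = Σ_{j=0}^∞ a_j ζ^{j+1} be analytic in a neighborhood of the closed unit disk. Then for each k ≥ 0, the moment M_k = (1/(2πi)) ∮_{∂D} f(ζ)^k f*(ζ) f'(ζ) dζ equals Richardson's formula: M_k = Σ over multi-indices (j_0,...,j_k) ≥ (0,...,0) of (j_0+1) a_{j_0} ⋯ a_{j_k} conj(a_{j_0+...+j_k+k}). -/
/-!
On the unit circle `1 / conj ζ = ζ`, so the integrand is `f ^ k * conj f * f'`. Expanding
`f ^ k * f'` as a `(k + 1)`-fold Cauchy product and `conj (f ζ) = ∑ conj (a m) * ζ ^ (-(m + 1))`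
gives a Laurent series in `ζ` whose coefficients are absolutely summable (they decay geometrically,
since `f` converges on a disk of radius `> 1`). It can therefore be integrated termwise, and only
the terms of total exponent `-1`, i.e. those with `m = j 0 + ⋯ + j k + k`, survive.
-/

open Complex MeasureTheory Metric
open scoped Real
open scoped ComplexConjugate Topology

theorem hasSum_fin_prod_of_summable_norm {𝕜 ι : Type*} [NormedField 𝕜] [CompleteSpace 𝕜]
    {n : ℕ} {b : Fin n → ι → 𝕜} {s : Fin n → 𝕜} (hb : ∀ i, Summable fun x => ‖b i x‖)
    (hs : ∀ i, HasSum (b i) (s i)) :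
    HasSum (fun j : Fin n → ι => ∏ i, b i (j i)) (∏ i, s i) ∧
      Summable fun j : Fin n → ι => ‖∏ i, b i (j i)‖ := by
  induction n with
  | zero => exact ⟨by simp, .of_finite⟩
  | succ n ih =>
    obtain ⟨hsum, hnorm⟩ := ih (b := fun i => b i.succ) (s := fun i => s i.succ)
      (fun i => hb i.succ) (fun i => hs i.succ)
    have hprod := summable_mul_of_summable_norm (hb 0) hnorm
    have hmul := (hs 0).mul hsum hprod
    have hmul_norm := (hb 0).mul_norm hnorm
    let e : ι × (Fin n → ι) ≃ (Fin (n + 1) → ι) := Fin.consEquiv fun _ => ι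
    have hcons (p : ι × (Fin n → ι)) :
        ∏ i, b i (e p i) = b 0 p.1 * ∏ i, b i.succ (p.2 i) :=
      Fin.prod_univ_succ _
    rw [← e.hasSum_iff, ← e.summable_iff, Fin.prod_univ_succ s]
    simp only [Function.comp_def, hcons]
    exact ⟨hmul, hmul_norm⟩

theorem summable_succ_mul_norm_mul_pow {E : Type*} [SeminormedAddCommGroup E] {a : ℕ → E}
    {r t C : ℝ} (ha : ∀ j, ‖a j‖ * r ^ j ≤ C) (ht : 0 ≤ t) (htr : t < r) :
    Summable fun j : ℕ => ((j : ℝ) + 1) * ‖a j‖ * t ^ j := by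
  have hr : 0 < r := ht.trans_lt htr
  have hq : ‖t / r‖ < 1 := by
    rwa [Real.norm_of_nonneg (div_nonneg ht hr.le), div_lt_one hr]
  have hgeom : Summable fun j : ℕ => ((j : ℝ) + 1) * (t / r) ^ j := by
    simpa using summable_choose_mul_geometric_of_norm_lt_one 1 hq
  refine (hgeom.mul_left C).of_nonneg_of_le (fun j => by positivity) fun j => ?_
  calc ((j : ℝ) + 1) * ‖a j‖ * t ^ j
        = ((j : ℝ) + 1) * (t / r) ^ j * (‖a j‖ * r ^ j) := by rw [div_pow]; field_simp
    _ ≤ ((j : ℝ) + 1) * (t / r) ^ j * C := by gcongr; exact ha j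
    _ = C * (((j : ℝ) + 1) * (t / r) ^ j) := mul_comm _ _

theorem exists_norm_mul_pow_le_of_summable {a : ℕ → ℂ} {r : ℝ} (hr : 1 ≤ r)
    (h : Summable fun j => a j * (r : ℂ) ^ (j + 1)) : ∃ C, ∀ j, ‖a j‖ * r ^ j ≤ C := by
  obtain ⟨C, hC⟩ := h.tendsto_atTop_zero.norm.bddAbove_range
  refine ⟨C, fun j => le_trans ?_ (hC ⟨j, rfl⟩)⟩
  dsimp only
  rw [norm_mul, norm_pow, norm_real, Real.norm_of_nonneg (by linarith)]
  exact mul_le_mul_of_nonneg_left (pow_le_pow_right₀ hr j.le_succ) (norm_nonneg _)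

theorem hasSum_deriv_of_hasSum_mul_pow_succ {a : ℕ → ℂ} {f : ℂ → ℂ} {s : ℝ}
    (ha : Summable fun j => ‖a j‖ * s ^ (j + 1))
    (hf : ∀ z ∈ ball (0 : ℂ) s, HasSum (fun j => a j * z ^ (j + 1)) (f z)) {z : ℂ}
    (hz : z ∈ ball (0 : ℂ) s) :
    HasSum (fun j : ℕ => ((j : ℂ) + 1) * a j * z ^ j) (deriv f z) := by
  have hfeq : f =ᶠ[𝓝 z] fun w => ∑' j, a j * w ^ (j + 1) :=
    Filter.eventuallyEq_of_mem (isOpen_ball.mem_nhds hz) fun w hw => (hf w hw).tsum_eq.symm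
  have hterm (j : ℕ) : deriv (fun w => a j * w ^ (j + 1)) z = ((j : ℂ) + 1) * a j * z ^ j := by
    simp only [deriv_const_mul_field', deriv_pow_field, Nat.cast_add, Nat.cast_one,
      add_tsub_cancel_right]
    ring
  have hbound (j : ℕ) (w : ℂ) (hw : w ∈ ball (0 : ℂ) s) :
      ‖a j * w ^ (j + 1)‖ ≤ ‖a j‖ * s ^ (j + 1) := by
    rw [norm_mul, norm_pow]
    gcongr
    exact (mem_ball_zero_iff.mp hw).le
  rw [hfeq.deriv_eq]
  simpa only [hterm] using hasSum_deriv_of_summable_norm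
    (F := fun j w => a j * w ^ (j + 1)) ha (fun j => by fun_prop) isOpen_ball hbound hz

theorem hasSum_circleIntegral_of_summable_norm {ι E : Type*} [Countable ι]
    [NormedAddCommGroup E] [NormedSpace ℂ E] {F : ι → ℂ → E} {f : ℂ → E} {c : ℂ} {R : ℝ}
    {u : ι → ℝ} (hu : Summable u)
    (hF : ∀ i, ContinuousOn (F i) (sphere c |R|))
    (hFu : ∀ i, ∀ z ∈ sphere c |R|, ‖F i z‖ ≤ u i)
    (hf : ∀ z ∈ sphere c |R|, HasSum (fun i => F i z) (f z)) :
    HasSum (fun i => ∮ z in C(c, R), F i z) (∮ z in C(c, R), f z) := by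
  refine intervalIntegral.hasSum_integral_of_dominated_convergence (fun i _ => |R| * u i)
    (fun i => ?_) (fun i => ?_) (.of_forall fun _ _ => hu.mul_left _) intervalIntegrable_const
    (.of_forall fun θ _ => (hf _ (circleMap_mem_sphere' c R θ)).const_smul _)
  · simp only [deriv_circleMap]
    refine (((continuous_circleMap 0 R).mul continuous_const).smul ?_).aestronglyMeasurable
    exact (hF i).comp_continuous (continuous_circleMap c R) (circleMap_mem_sphere' c R)
  · refine .of_forall fun θ _ => ?_
    rw [deriv_circleMap, norm_smul, norm_mul, norm_circleMap_zero, norm_I, mul_one]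
    exact mul_le_mul_of_nonneg_left (hFu i _ (circleMap_mem_sphere' c R θ)) (abs_nonneg R)

theorem circleIntegral_zpow_eq_ite (n : ℤ) :
    (∮ z in C(0, 1), z ^ n) = if n = -1 then 2 * π * I else 0 := by
  split_ifs with hn
  · simpa [hn] using circleIntegral.integral_sub_center_inv (0 : ℂ) one_ne_zero
  · simpa using circleIntegral.integral_sub_zpow_of_ne hn 0 0 1

theorem two_pi_I_inv_mul_circleIntegral_eq_tsum {ι : Type*} [Countable ι] {c : ι → ℂ}
    {N : ι → ℤ} {F : ℂ → ℂ} (hc : Summable fun x => ‖c x‖)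
    (hF : ∀ z ∈ sphere (0 : ℂ) 1, HasSum (fun x => c x * z ^ N x) (F z)) :
    (2 * π * I)⁻¹ * ∮ z in C(0, 1), F z = ∑' x, if N x = -1 then c x else 0 := by
  have hsphere : sphere (0 : ℂ) |1| = sphere 0 1 := by rw [abs_one]
  have hswap := hasSum_circleIntegral_of_summable_norm
    (F := fun x z => c x * z ^ N x) (R := 1) hc
    (fun x => continuousOn_const.mul (continuousOn_id.zpow₀ _ fun z hz => .inl (by
      rintro rfl; simp at hz)))
    (fun x z hz => by rw [hsphere, mem_sphere_zero_iff_norm] at hz; simp [hz])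
    (hsphere ▸ hF)
  rw [← hswap.tsum_eq, ← tsum_mul_left]
  refine tsum_congr fun x => ?_
  rw [circleIntegral.integral_const_mul, mul_left_comm, circleIntegral_zpow_eq_ite]
  split_ifs
  · rw [inv_mul_cancel₀ two_pi_I_ne_zero, mul_one]
  · rw [mul_zero, mul_zero]

/-- In the index `x = (j, m)`, `j` runs over the terms of the product `f' * f ^ k`, the factor `f'`
being indexed by `j 0`, and `m` over the terms of `conj f`. -/
def richardsonCoeff (a : ℕ → ℂ) (k : ℕ) (x : (Fin (k + 1) → ℕ) × ℕ) : ℂ :=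
  ((x.1 0 : ℂ) + 1) * (∏ i, a (x.1 i)) * conj (a x.2)

def richardsonExponent (k : ℕ) (x : (Fin (k + 1) → ℕ) × ℕ) : ℤ :=
  ((∑ i, x.1 i) + k : ℕ) - (x.2 + 1 : ℕ)

theorem hasSum_richardsonCoeff_mul_zpow {a : ℕ → ℂ} {z u u' : ℂ} (hz : ‖z‖ = 1)
    (ha : Summable fun j : ℕ => ((j : ℝ) + 1) * ‖a j‖)
    (hu : HasSum (fun j => a j * z ^ (j + 1)) u)
    (hu' : HasSum (fun j : ℕ => ((j : ℂ) + 1) * a j * z ^ j) u') (k : ℕ) :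
    HasSum (fun x => richardsonCoeff a k x * z ^ richardsonExponent k x) (u ^ k * conj u * u') ∧
      Summable fun x => ‖richardsonCoeff a k x * z ^ richardsonExponent k x‖ := by
  have hz0 : z ≠ 0 := by rintro rfl; simp at hz
  have hnorm_succ (j : ℕ) : ‖((j : ℂ) + 1)‖ = (j : ℝ) + 1 := by norm_cast
  have ha0 : Summable fun j => ‖a j‖ :=
    ha.of_nonneg_of_le (fun j => norm_nonneg _) fun j =>
      le_mul_of_one_le_left (norm_nonneg _) (by linarith [j.cast_nonneg (α := ℝ)])
  let b : Fin (k + 1) → ℕ → ℂ :=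
    Fin.cons (fun j => ((j : ℂ) + 1) * a j * z ^ j) fun _ j => a j * z ^ (j + 1)
  have hb : ∀ i, Summable fun j => ‖b i j‖ := Fin.cases
    (by simpa [b, hz, hnorm_succ] using ha) fun i => by simpa [b, hz] using ha0
  obtain ⟨hP, hPn⟩ := hasSum_fin_prod_of_summable_norm hb
    (s := Fin.cons u' fun _ => u) (Fin.cases hu' fun _ => hu)
  have hconj : HasSum (fun m : ℕ => conj (a m) * (z ^ (m + 1))⁻¹) (conj u) := by
    simpa [Function.comp_def, ← inv_eq_conj hz, zpow_neg, inv_pow] using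
      hu.map (starRingEnd ℂ) continuous_conj
  have hconj_norm : Summable fun m : ℕ => ‖conj (a m) * (z ^ (m + 1))⁻¹‖ := by
    simpa [hz] using ha0
  have hterm (x : (Fin (k + 1) → ℕ) × ℕ) :
      (∏ i, b i (x.1 i)) * (conj (a x.2) * (z ^ (x.2 + 1))⁻¹) =
        richardsonCoeff a k x * z ^ richardsonExponent k x := by
    obtain ⟨j, m⟩ := x
    simp only [richardsonCoeff, richardsonExponent, b, Fin.prod_univ_succ, Fin.sum_univ_succ,
      Fin.cons_zero, Fin.cons_succ, Finset.prod_mul_distrib, Finset.prod_pow_eq_pow_sum,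
      Finset.sum_add_distrib, Fin.sum_const, smul_eq_mul, mul_one]
    rw [zpow_sub₀ hz0, zpow_natCast, zpow_natCast]
    ring
  have hprod := summable_mul_of_summable_norm hPn hconj_norm
  have hmul := hP.mul hconj hprod
  have hmul_norm := hPn.mul_norm hconj_norm
  simp only [hterm] at hmul hmul_norm
  have hval :
      (∏ i, (Fin.cons u' fun _ => u : Fin (k + 1) → ℂ) i) * conj u = u ^ k * conj u * u' := by
    simp only [Fin.prod_univ_succ, Fin.cons_zero, Fin.cons_succ, Finset.prod_const,
      Finset.card_univ, Fintype.card_fin]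
    ring
  rw [hval] at hmul
  exact ⟨hmul, hmul_norm⟩

theorem tsum_ite_richardsonExponent_eq (a : ℕ → ℂ) (k : ℕ) :
    (∑' x, if richardsonExponent k x = -1 then richardsonCoeff a k x else 0) =
      ∑' j : Fin (k + 1) → ℕ, ((j 0 : ℂ) + 1) * (∏ i, a (j i)) * conj (a ((∑ i, j i) + k)) := by
  have hinj : Function.Injective fun j : Fin (k + 1) → ℕ => (j, (∑ i, j i) + k) :=
    fun _ _ h => congrArg Prod.fst h
  rw [← hinj.tsum_eq]
  · refine tsum_congr fun j => ?_
    rw [if_pos (by simp [richardsonExponent])]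
    rfl
  · rintro ⟨j, m⟩ hx
    have hN : richardsonExponent k (j, m) = -1 := by
      by_contra h
      exact hx (if_neg h)
    refine ⟨j, ?_⟩
    simp only [richardsonExponent] at hN
    simp only [Prod.mk.injEq, true_and]
    omega

/-- Richardson's formula: if `f(ζ) = Σ_{j≥0} a_j ζ^{j+1}` is analytic in a
neighborhood of the closed unit disk, then the moment
`M_k = (1/(2πi)) ∮_{∂D} f^k f* f' dζ` equals
`Σ_{(j_0,…,j_k) ≥ 0} (j_0+1) a_{j_0} ⋯ a_{j_k} conj(a_{j_0+⋯+j_k+k})`. -/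
theorem stmt_1 (a : ℕ → ℂ) (f : ℂ → ℂ) (R : ℝ) (hR : 1 < R)
    (hf : ∀ ζ ∈ ball (0 : ℂ) R, HasSum (fun j => a j * ζ ^ (j + 1)) (f ζ)) (k : ℕ) :
    ((2 * π * Complex.I)⁻¹ *
        ∮ ζ in C(0, 1), f ζ ^ k * (starRingEnd ℂ) (f (1 / (starRingEnd ℂ) ζ)) * deriv f ζ) =
      ∑' j : Fin (k + 1) → ℕ,
        (((j 0 : ℕ) : ℂ) + 1) * (∏ i, a (j i)) * (starRingEnd ℂ) (a ((∑ i, j i) + k)) := by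
  obtain ⟨r, h1r, hrR⟩ := exists_between hR
  obtain ⟨s, h1s, hsr⟩ := exists_between h1r
  obtain ⟨C, hC⟩ := exists_norm_mul_pow_le_of_summable h1r.le
    (hf r (by simpa [abs_of_pos (one_pos.trans h1r)] using hrR)).summable
  have hcoeff (t : ℝ) (ht : 0 ≤ t) (htr : t < r) :
      Summable fun j : ℕ => ((j : ℝ) + 1) * ‖a j‖ * t ^ j :=
    summable_succ_mul_norm_mul_pow hC ht htr
  have hs : Summable fun j => ‖a j‖ * s ^ (j + 1) :=
    ((hcoeff s (by linarith) hsr).mul_left s).of_nonneg_of_le (fun j => by positivity) fun j =>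
      calc ‖a j‖ * s ^ (j + 1) = s * (1 * ‖a j‖ * s ^ j) := by ring
        _ ≤ s * (((j : ℝ) + 1) * ‖a j‖ * s ^ j) := by gcongr; linarith [j.cast_nonneg (α := ℝ)]
  have hexpand : ∀ z ∈ sphere (0 : ℂ) 1,
      HasSum (fun x => richardsonCoeff a k x * z ^ richardsonExponent k x)
        (f z ^ k * conj (f (1 / conj z)) * deriv f z) ∧
      Summable fun x => ‖richardsonCoeff a k x * z ^ richardsonExponent k x‖ := by
    intro z hz
    rw [mem_sphere_zero_iff_norm] at hz
    rw [← inv_eq_conj hz, one_div, inv_inv]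
    exact hasSum_richardsonCoeff_mul_zpow hz (by simpa using hcoeff 1 zero_le_one h1r)
      (hf z (by simp [hz, hR]))
      (hasSum_deriv_of_hasSum_mul_pow_succ hs
        (fun w hw => hf w (ball_subset_ball (by linarith) hw)) (by simp [hz, h1s])) k
  rw [two_pi_I_inv_mul_circleIntegral_eq_tsum (by simpa using (hexpand 1 (by simp)).2)
    fun z hz => (hexpand z hz).1]
  exact tsum_ite_richardsonExponent_eq a k
end

section
/- Let f(ζ) = c ζ(ζ−a)/(ζ−b) with 0 < |a| < 1 < |b|, c ≠ 0, and let h be analytic in a neighborhood of the closure of f(D). Then (1/(2πi)) ∮_{∂D} h(f(ζ)) f*(ζ) f'(ζ) dζ = A h(f(0)) + B h(f(1/b̄)), where A = |c|² a/b and B = |c|² (ā−b̄)(1 − 2|b|² + a b̄ |b|²) / (b̄ (1−|b|²)²). -/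
/-!
On the unit circle `conj ζ = ζ⁻¹`, so `f*(ζ) f'(ζ)` is the rational function
`c̄ (1 - ā ζ) c (ζ² - 2bζ + ab) / (ζ (1 - b̄ ζ) (ζ - b)²)`. Its partial fraction decomposition
has simple poles at `0` and `1 / b̄` inside the disk, with residues `A` and `B`, plus a part whose
only pole is at `b`, outside the closed disk. Multiplying by `h ∘ f`, Cauchy's integral formula
evaluates the two simple-pole terms and the Cauchy–Goursat theorem kills the rest.
-/

open Complex Metric ComplexConjugate
open scoped Real

theorem circleIntegral_two_simple_poles_mul {g q : ℂ → ℂ} {c z w : ℂ} {R : ℝ} (A B : ℂ)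
    (hg : DiffContOnCl ℂ g (ball c R)) (hq : DiffContOnCl ℂ q (ball c R))
    (hz : z ∈ ball c R) (hw : w ∈ ball c R) :
    ∮ ζ in C(c, R), (A / (ζ - z) + B / (ζ - w) + q ζ) * g ζ =
      2 * π * I * (A * g z + B * g w) := by
  have hR : 0 ≤ R := (nonempty_ball.mp ⟨z, hz⟩).le
  have hpole : ∀ {v : ℂ} (C : ℂ), v ∈ ball c R →
      CircleIntegrable (fun ζ => (ζ - v)⁻¹ • (C * g ζ)) c R ∧
      ∮ ζ in C(c, R), (ζ - v)⁻¹ • (C * g ζ) = 2 * π * I * (C * g v) := by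
    intro v C hv
    refine ⟨ContinuousOn.circleIntegrable hR ?_, (hg.const_smul C).circleIntegral_sub_inv_smul hv⟩
    refine ((continuousOn_id.sub continuousOn_const).inv₀ fun ζ hζ => ?_).smul
      (continuousOn_const.mul (hg.continuousOn_ball.mono sphere_subset_closedBall))
    exact sub_ne_zero.mpr
      (ne_of_mem_of_not_mem hζ fun hv' => (mem_ball.mp hv).ne (mem_sphere.mp hv'))
  obtain ⟨hzi, hzI⟩ := hpole A hz
  obtain ⟨hwi, hwI⟩ := hpole B hw
  have hqg : DiffContOnCl ℂ (fun ζ => q ζ * g ζ) (ball c R) := hq.smul hg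
  have hqgi : CircleIntegrable (fun ζ => q ζ * g ζ) c R :=
    (hqg.continuousOn_ball.mono sphere_subset_closedBall).circleIntegrable hR
  calc ∮ ζ in C(c, R), (A / (ζ - z) + B / (ζ - w) + q ζ) * g ζ
      = ∮ ζ in C(c, R), ((ζ - z)⁻¹ • (A * g ζ) + (ζ - w)⁻¹ • (B * g ζ) + q ζ * g ζ) := by
        congr 1; ext ζ; simp only [smul_eq_mul]; ring
    _ = 2 * π * I * (A * g z + B * g w) := by
        rw [circleIntegral.integral_add
            (f := fun ζ => (ζ - z)⁻¹ • (A * g ζ) + (ζ - w)⁻¹ • (B * g ζ)) (hzi.add hwi) hqgi,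
          circleIntegral.integral_add hzi hwi, hzI, hwI, hqg.circleIntegral_eq_zero hR]
        ring

theorem diffContOnCl_div_of_ne_zero_on_closedBall {p d : ℂ → ℂ} {c : ℂ} {R : ℝ}
    (hp : Differentiable ℂ p) (hd : Differentiable ℂ d) (hd0 : ∀ ζ ∈ closedBall c R, d ζ ≠ 0) :
    DiffContOnCl ℂ (fun ζ => p ζ / d ζ) (ball c R) :=
  DifferentiableOn.diffContOnCl fun ζ hζ =>
    ((hp ζ).div (hd ζ) (hd0 ζ (closure_ball_subset_closedBall hζ))).differentiableWithinAt

theorem hasDerivAt_mul_sub_div_sub (a b c : ℂ) {ζ : ℂ} (hζ : ζ ≠ b) :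
    HasDerivAt (fun z => c * z * (z - a) / (z - b))
      (c * (ζ ^ 2 - 2 * b * ζ + a * b) / (ζ - b) ^ 2) ζ := by
  have hnum := ((hasDerivAt_id' ζ).const_mul c).fun_mul ((hasDerivAt_id' ζ).sub_const a)
  exact (hnum.fun_div ((hasDerivAt_id' ζ).sub_const b) (sub_ne_zero.mpr hζ)).congr_deriv
    (by ring)

theorem conj_mul_sub_div_sub_one_div_conj (a b c : ℂ) {ζ : ℂ} (hζ : ‖ζ‖ = 1) :
    conj (c * (1 / conj ζ) * (1 / conj ζ - a) / (1 / conj ζ - b)) =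
      conj c * (1 - conj a * ζ) / (ζ * (1 - conj b * ζ)) := by
  have hζ0 : ζ ≠ 0 := norm_ne_zero_iff.mp (hζ ▸ one_ne_zero)
  rw [one_div, ← inv_eq_conj hζ, inv_inv]
  simp only [map_div₀, map_mul, map_sub, ← inv_eq_conj hζ]
  rw [← mul_div_mul_right _ _ (pow_ne_zero 2 hζ0)]
  congr 1 <;> field_simp

theorem exists_partial_fraction (a b c a' b' c' : ℂ) (hb : b ≠ 0) (hb' : b' ≠ 0)
    (hbb : b * b' ≠ 1) :
    ∃ n₁ n₀ : ℂ, ∀ ζ : ℂ, ζ ≠ 0 → ζ ≠ b → b' * ζ ≠ 1 →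
      c' * (1 - a' * ζ) / (ζ * (1 - b' * ζ)) * (c * (ζ ^ 2 - 2 * b * ζ + a * b) / (ζ - b) ^ 2) =
        c * c' * a / b / (ζ - 0) +
          c * c' * ((a' - b') * (1 - 2 * (b * b') + a * b' * (b * b'))) / (b' * (1 - b * b') ^ 2) /
            (ζ - b'⁻¹) + (n₁ * ζ + n₀) / (ζ - b) ^ 2 := by
  set A := c * c' * a / b
  set B := c * c' * ((a' - b') * (1 - 2 * (b * b') + a * b' * (b * b'))) / (b' * (1 - b * b') ^ 2)
  -- `n₁` is forced by the decay at infinity (the residues sum to `c c' a' / b'`), `n₀` by `ζ = b`.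
  refine ⟨c * c' * a' / b' - A - B,
    c * c' * (1 - a' * b) * (a - b) / (1 - b * b') - (c * c' * a' / b' - A - B) * b,
    fun ζ hζ hζb hζb' => ?_⟩
  have hden₁ : 1 - b' * b ≠ 0 := sub_ne_zero.mpr (by rw [mul_comm]; exact Ne.symm hbb)
  have hden₂ : 1 - ζ * b' ≠ 0 := sub_ne_zero.mpr (by rw [mul_comm]; exact Ne.symm hζb')
  have hden₃ : ζ - b ≠ 0 := sub_ne_zero.mpr hζb
  rw [show ζ - b'⁻¹ = -(1 - b' * ζ) / b' by field_simp; ring]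
  simp only [A, B, sub_zero]
  field_simp
  ring

theorem exists_partial_fraction_reflect_mul_deriv (a b c : ℂ) (hb : 1 < ‖b‖) :
    ∃ n₁ n₀ : ℂ, ∀ ζ : ℂ, ‖ζ‖ = 1 →
      conj (c * (1 / conj ζ) * (1 / conj ζ - a) / (1 / conj ζ - b)) *
          deriv (fun z => c * z * (z - a) / (z - b)) ζ =
        (‖c‖ : ℂ) ^ 2 * a / b / (ζ - 0) +
          (‖c‖ : ℂ) ^ 2 *
              ((conj a - conj b) * (1 - 2 * (‖b‖ : ℂ) ^ 2 + a * conj b * (‖b‖ : ℂ) ^ 2)) /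
            (conj b * (1 - (‖b‖ : ℂ) ^ 2) ^ 2) / (ζ - (conj b)⁻¹) +
          (n₁ * ζ + n₀) / (ζ - b) ^ 2 := by
  have hb0 : b ≠ 0 := norm_pos_iff.mp (one_pos.trans hb)
  have hbb : b * conj b ≠ 1 := by
    rw [mul_conj', ← ofReal_pow, ← ofReal_one, Ne, ofReal_inj]
    nlinarith
  obtain ⟨n₁, n₀, hpf⟩ :=
    exists_partial_fraction a b c (conj a) (conj b) (conj c) hb0 ((map_ne_zero _).mpr hb0) hbb
  refine ⟨n₁, n₀, fun ζ hζ => ?_⟩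
  have hζ0 : ζ ≠ 0 := norm_ne_zero_iff.mp (hζ ▸ one_ne_zero)
  have hζb : ζ ≠ b := fun hζb => hb.ne' (hζb ▸ hζ)
  have hbζ : conj b * ζ ≠ 1 := fun h1 => by simpa [hζ, hb.ne'] using congrArg norm h1
  rw [conj_mul_sub_div_sub_one_div_conj a b c hζ, (hasDerivAt_mul_sub_div_sub a b c hζb).deriv,
    hpf ζ hζ0 hζb hbζ, ← mul_conj', ← mul_conj']

theorem stmt_6_general (a b c : ℂ) (hb : 1 < ‖b‖)
    (f : ℂ → ℂ) (hf : f = fun ζ => c * ζ * (ζ - a) / (ζ - b))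
    (h : ℂ → ℂ) (hh : AnalyticOnNhd ℂ h (closure (f '' ball 0 1))) :
    ((2 * π * Complex.I)⁻¹ *
        ∮ ζ in C(0, 1), h (f ζ) * (starRingEnd ℂ) (f (1 / (starRingEnd ℂ) ζ)) * deriv f ζ) =
      ((‖c‖ : ℂ) ^ 2 * a / b) * h (f 0) +
        ((‖c‖ : ℂ) ^ 2 *
            (((starRingEnd ℂ) a - (starRingEnd ℂ) b) *
              (1 - 2 * (‖b‖ : ℂ) ^ 2 + a * (starRingEnd ℂ) b * (‖b‖ : ℂ) ^ 2)) /
            ((starRingEnd ℂ) b * (1 - (‖b‖ : ℂ) ^ 2) ^ 2)) *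
          h (f (1 / (starRingEnd ℂ) b)) := by
  subst hf
  beta_reduce
  have hb_notMem : ∀ ζ ∈ closedBall (0 : ℂ) 1, ζ - b ≠ 0 := fun ζ hζ hζb =>
    (mem_closedBall_zero_iff.mp (sub_eq_zero.mp hζb ▸ hζ)).not_gt hb
  have hpole : (conj b)⁻¹ ∈ ball (0 : ℂ) 1 := by
    rw [mem_ball_zero_iff, norm_inv, norm_conj]
    exact inv_lt_one_of_one_lt₀ hb
  obtain ⟨n₁, n₀, hpf⟩ := exists_partial_fraction_reflect_mul_deriv a b c hb
  have hhf : DiffContOnCl ℂ (fun ζ => h (c * ζ * (ζ - a) / (ζ - b))) (ball 0 1) :=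
    hh.differentiableOn.diffContOnCl.comp
      (diffContOnCl_div_of_ne_zero_on_closedBall (by fun_prop) (by fun_prop) hb_notMem)
      (Set.mapsTo_image _ _)
  have hq := diffContOnCl_div_of_ne_zero_on_closedBall (p := fun ζ => n₁ * ζ + n₀)
    (by fun_prop) (by fun_prop) fun ζ hζ => pow_ne_zero 2 (hb_notMem ζ hζ)
  rw [circleIntegral.integral_congr zero_le_one fun ζ hζ => by
      rw [mul_assoc, hpf ζ (mem_sphere_zero_iff_norm.mp hζ), mul_comm],
    circleIntegral_two_simple_poles_mul _ _ hhf hq (mem_ball_self one_pos) hpole,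
    ← mul_assoc, inv_mul_cancel₀ two_pi_I_ne_zero, one_mul, one_div]

/-- for `f(ζ) = cζ(ζ−a)/(ζ−b)` with `0<|a|<1<|b|`, `c ≠ 0`, and `h`
analytic in a neighborhood of the closure of `f(D)`,
`(1/(2πi)) ∮_{∂D} h(f(ζ)) f*(ζ) f'(ζ) dζ = A h(f(0)) + B h(f(1/b̄))` with
`A = |c|² a/b` and `B = |c|² (ā−b̄)(1−2|b|²+ab̄|b|²)/(b̄(1−|b|²)²)`. -/
theorem stmt_6 (a b c : ℂ) (ha : 0 < ‖a‖) (ha1 : ‖a‖ < 1)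
    (hb : 1 < ‖b‖) (hc : c ≠ 0)
    (f : ℂ → ℂ) (hf : f = fun ζ => c * ζ * (ζ - a) / (ζ - b))
    (h : ℂ → ℂ) (hh : AnalyticOnNhd ℂ h (closure (f '' ball 0 1))) :
    ((2 * π * Complex.I)⁻¹ *
        ∮ ζ in C(0, 1), h (f ζ) * (starRingEnd ℂ) (f (1 / (starRingEnd ℂ) ζ)) * deriv f ζ) =
      ((‖c‖ : ℂ) ^ 2 * a / b) * h (f 0) +
        ((‖c‖ : ℂ) ^ 2 *
            (((starRingEnd ℂ) a - (starRingEnd ℂ) b) *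
              (1 - 2 * (‖b‖ : ℂ) ^ 2 + a * (starRingEnd ℂ) b * (‖b‖ : ℂ) ^ 2)) /
            ((starRingEnd ℂ) b * (1 - (‖b‖ : ℂ) ^ 2) ^ 2)) *
          h (f (1 / (starRingEnd ℂ) b)) :=
  stmt_6_general a b c hb f hf h hh
end

section
/- Let f(ζ) = c ζ(ζ−a)/(ζ−b) with 0 < |a| < 1 < |b|, c ≠ 0, and suppose ω_1 := b(1 − √(1−a/b)) satisfies ω_1 = 1/b̄ (i.e., the quadrature node 1/b̄ is a zero of f'). Then the weight B = |c|²(ā−b̄)(1−2|b|²+ab̄|b|²)/(b̄(1−|b|²)²) vanishes, and the quadrature identity reduces to the one-point identity (1/(2πi)) ∫_D g(ζ)|f'(ζ)|² dζ̄ dζ = A g(0) with A = 2|c|²/|b|² − |c|²/|b|⁴, for every g analytic and integrable with respect to |f'|² on D. -/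
/-!
Since `f'(ζ) = c (1 + b(a-b)/(ζ-b)²)`, the density is `g |f'|² = c̄ h + c̄ k h / (ζ̄ - b̄)²` with
`h = g f'` holomorphic on the disk and `k = conj (b(a-b))`. In polar coordinates the disk integral
becomes a radial integral of circle averages. The circle average of `h` is `h 0`. On `|ζ| = r`
one has `ζ̄ = r²/ζ`, so the second term equals `ζ² h(ζ) / (b̄² (ζ - r²/b̄)²)`, whose average is
`(ζ h)'(r²/b̄) / b̄²` by Cauchy's formula for the derivative; as `2r (ζ h)'(r²/b̄)` is the
`r`-derivative of `r² h(r²/b̄)`, this term contributes `π k h(1/b̄) / b̄²`, which vanishes because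
`1/b̄` is a critical point of `f`. The same relation `f'(1/b̄) = 0` makes the weight `B` vanish and
turns `π c̄ h(0) = π |c|² a/b · g(0)` into `π A g(0)`.
-/

open Complex ComplexConjugate MeasureTheory Metric Set Real

theorem integrableOn_polarCoord_target_of_integrable {E : Type*} [NormedAddCommGroup E]
    [NormedSpace ℝ E] {f : ℂ → E} (hf : Integrable f) :
    IntegrableOn (fun p : ℝ × ℝ => p.1 • f (Complex.polarCoord.symm p)) polarCoord.target := by
  have hf' : Integrable (f ∘ measurableEquivRealProd.symm) :=
    (volume_preserving_equiv_real_prod.symm.integrable_comp_emb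
      measurableEquivRealProd.symm.measurableEmbedding).2 hf
  have := (integrableOn_image_iff_integrableOn_abs_det_fderiv_smul volume
    polarCoord.open_target.measurableSet
    (fun p _ => (hasFDerivAt_polarCoord_symm p).hasFDerivWithinAt) polarCoord.symm.injOn _).1
    hf'.integrableOn
  refine this.congr_fun (fun p hp => ?_) polarCoord.open_target.measurableSet
  simp only [det_fderivPolarCoordSymm, abs_of_pos (show 0 < p.1 from hp.1)]
  rfl

theorem polarCoord_symm_eq_circleMap_s9 (r θ : ℝ) :
    Complex.polarCoord.symm (r, θ) = circleMap 0 r θ := by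
  simp [Complex.polarCoord_symm_apply, circleMap, Complex.exp_mul_I]

theorem setIntegral_Ioo_circleMap_eq_circleAverage {E : Type*} [NormedAddCommGroup E]
    [NormedSpace ℝ E] [CompleteSpace E] (f : ℂ → E) (c : ℂ) (r : ℝ) :
    ∫ θ in Ioo (-π) π, f (circleMap c r θ) = (2 * π) • circleAverage f c r := by
  rw [circleAverage_eq_integral_add (-π), smul_smul, mul_inv_cancel₀ (by positivity), one_smul,
    intervalIntegral.integral_comp_add_right (fun θ => f (circleMap c r θ)),
    intervalIntegral.integral_of_le (by linarith [pi_pos]), integral_Ioc_eq_integral_Ioo]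
  ring_nf

theorem setIntegral_ball_zero_eq_integral_circleAverage {E : Type*} [NormedAddCommGroup E]
    [NormedSpace ℝ E] [CompleteSpace E] {f : ℂ → E} {R : ℝ} (hf : IntegrableOn f (ball 0 R)) :
    ∫ z in ball (0 : ℂ) R, f z = ∫ r in Ioo 0 R, (2 * π * r) • circleAverage f 0 r := by
  set F := (ball (0 : ℂ) R).indicator f
  have hF : Integrable F := (integrable_indicator_iff measurableSet_ball).2 hf
  have hFpolar (p : ℝ × ℝ) (hp : p ∈ polarCoord.target) : p.1 • F (Complex.polarCoord.symm p) =
      (Iio R).indicator (fun r => r • f (circleMap 0 r p.2)) p.1 := by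
    obtain ⟨r, θ⟩ := p
    have hr : 0 < r := hp.1
    simp only [F, polarCoord_symm_eq_circleMap_s9, indicator, mem_ball_zero_iff, norm_circleMap_zero,
      abs_of_pos hr, mem_Iio]
    split_ifs <;> simp
  rw [← integral_indicator measurableSet_ball, ← Complex.integral_comp_polarCoord_symm,
    setIntegral_congr_fun polarCoord.open_target.measurableSet hFpolar, polarCoord_target,
    Measure.volume_eq_prod, setIntegral_prod]
  · have hinner (r : ℝ) : ∫ θ in Ioo (-π) π, (Iio R).indicator (fun r => r • f (circleMap 0 r θ)) r
        = (Iio R).indicator (fun r => (2 * π * r) • circleAverage f 0 r) r := by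
      by_cases hr : r ∈ Iio R
      · simp only [indicator_of_mem hr]
        rw [integral_smul, setIntegral_Ioo_circleMap_eq_circleAverage, smul_smul, mul_comm r]
      · simp only [indicator_of_notMem hr, integral_zero]
    simp only [hinner]
    rw [setIntegral_indicator measurableSet_Iio, Ioi_inter_Iio]
  · rw [← Measure.volume_eq_prod, ← polarCoord_target]
    exact (integrableOn_polarCoord_target_of_integrable hF).congr_fun hFpolar
      polarCoord.open_target.measurableSet

theorem circleAverage_div_sub_sq_smul {E : Type*} [NormedAddCommGroup E] [NormedSpace ℂ E]
    [CompleteSpace E] {U : Set ℂ} (hU : IsOpen U) {q : ℂ → E} (hq : DifferentiableOn ℂ q U)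
    {R : ℝ} (hR : closedBall 0 R ⊆ U) {w : ℂ} (hw : w ∈ ball 0 R) :
    circleAverage (fun z => (z / (z - w) ^ 2) • q z) 0 R = deriv q w := by
  have hR0 : R ≠ 0 := (pos_of_mem_ball hw).ne'
  rw [circleAverage_eq_circleIntegral hR0,
    ← two_pi_I_inv_smul_circleIntegral_sub_sq_inv_smul_of_differentiable hU hR hq hw]
  congr 1
  refine circleIntegral.integral_congr (pos_of_mem_ball hw).le fun z hz => ?_
  have hz : z ≠ 0 := ne_of_mem_sphere hz hR0
  simp only [sub_zero, smul_smul]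
  congr 1
  field_simp

theorem div_conj_sub_sq_eq_of_mul_conj {z β : ℂ} {r : ℝ} (hz : z * conj z = r ^ 2) (hz0 : z ≠ 0)
    (hβ : β ≠ 0) (h : ℂ) :
    h / (conj z - β) ^ 2 = (β ^ 2)⁻¹ * (z / (z - r ^ 2 * β⁻¹) ^ 2 * (z * h)) := by
  have hconj : conj z = r ^ 2 / z := by rw [← hz]; field_simp
  rw [hconj]
  field_simp
  ring

theorem circleAverage_div_conj_sub_sq {U : Set ℂ} (hU : IsOpen U) {h : ℂ → ℂ}
    (hh : DifferentiableOn ℂ h U) {r : ℝ} (hr : closedBall 0 r ⊆ U) (hr0 : 0 < r) {b : ℂ}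
    (hrb : r < ‖b‖) :
    circleAverage (fun z => h z / (conj z - conj b) ^ 2) 0 r =
      (conj b ^ 2)⁻¹ * deriv (fun z => z * h z) (r ^ 2 * (conj b)⁻¹) := by
  have hb : conj b ≠ 0 := by
    rw [map_ne_zero, ← norm_pos_iff]; linarith
  have hw : r ^ 2 * (conj b)⁻¹ ∈ ball 0 r := by
    rw [mem_ball_zero_iff, norm_mul, norm_inv, Complex.norm_conj, norm_pow, Complex.norm_real,
      Real.norm_of_nonneg hr0.le, ← div_eq_mul_inv, div_lt_iff₀ (hr0.trans hrb)]
    nlinarith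
  rw [circleAverage_congr_sphere (f₂ := fun z =>
      (conj b ^ 2)⁻¹ • ((z / (z - r ^ 2 * (conj b)⁻¹) ^ 2) • (z * h z))) fun z hz => ?_,
    circleAverage_fun_smul,
    circleAverage_div_sub_sq_smul hU (q := fun z => z * h z) (by fun_prop) hr hw, smul_eq_mul]
  rw [mem_sphere_zero_iff_norm, abs_of_pos hr0] at hz
  have hz0 : z ≠ 0 := norm_pos_iff.1 (hz ▸ hr0)
  exact div_conj_sub_sq_eq_of_mul_conj (by rw [mul_conj', hz]) hz0 hb (h z)

theorem integral_Ioo_zero_one_smul_deriv_mul_self {h : ℂ → ℂ}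
    (hh : DifferentiableOn ℂ h (ball 0 1)) {w : ℂ} (hw : w ∈ ball 0 1) (α β : ℂ) :
    ∫ r in Ioo (0 : ℝ) 1, (2 * π * r) • (α + β * deriv (fun z => z * h z) (r ^ 2 * w)) =
      π * (α + β * h w) := by
  have hmem (x : ℝ) (hx : x ∈ uIcc 0 1) : (x : ℂ) ^ 2 * w ∈ ball 0 1 := by
    rw [uIcc_of_le zero_le_one] at hx
    rw [mem_ball_zero_iff] at hw ⊢
    rw [norm_mul, norm_pow, Complex.norm_real, Real.norm_of_nonneg hx.1]
    calc x ^ 2 * ‖w‖ ≤ 1 * ‖w‖ := by gcongr; exact pow_le_one₀ hx.1 hx.2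
      _ < 1 := by rwa [one_mul]
  have hq : DifferentiableOn ℂ (fun z => z * h z) (ball 0 1) := by fun_prop
  have hderiv (x : ℝ) (hx : x ∈ uIcc 0 1) : HasDerivAt
      (fun r : ℝ => (π : ℂ) * ((r : ℂ) ^ 2 * (α + β * h ((r : ℂ) ^ 2 * w))))
      ((2 * π * x) • (α + β * deriv (fun z => z * h z) ((x : ℂ) ^ 2 * w))) x := by
    have hhx := (hh.differentiableAt (isOpen_ball.mem_nhds (hmem x hx))).hasDerivAt
    have hqx : deriv (fun z => z * h z) ((x : ℂ) ^ 2 * w) =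
        h ((x : ℂ) ^ 2 * w) + (x : ℂ) ^ 2 * w * deriv h ((x : ℂ) ^ 2 * w) :=
      ((hasDerivAt_id' _).mul hhx).deriv.trans (by rw [one_mul])
    have hsq : HasDerivAt (fun z : ℂ => z ^ 2) (2 * x) (x : ℂ) := by
      simpa using hasDerivAt_pow 2 (x : ℂ)
    have := ((hsq.mul ((hhx.comp (x : ℂ) (hsq.mul_const w)).const_mul β |>.const_add α)).const_mul
      (π : ℂ)).comp_ofReal
    refine this.congr_deriv ?_
    rw [hqx, real_smul, Function.comp_apply]
    push_cast
    ring
  have hcont : ContinuousOn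
      (fun r : ℝ => (2 * π * r) • (α + β * deriv (fun z => z * h z) ((r : ℂ) ^ 2 * w)))
      (uIcc 0 1) := by
    refine (Continuous.continuousOn (by fun_prop : Continuous fun r : ℝ => 2 * π * r)).smul
      (continuousOn_const.add (continuousOn_const.mul ?_))
    exact (hq.deriv isOpen_ball).continuousOn.comp (Continuous.continuousOn (by fun_prop)) hmem
  rw [← integral_Ioc_eq_integral_Ioo, ← intervalIntegral.integral_of_le zero_le_one,
    intervalIntegral.integral_eq_sub_of_hasDerivAt hderiv (hcont.intervalIntegrable)]
  simp

theorem circleAverage_const_mul (a : ℂ) (f : ℂ → ℂ) (c : ℂ) (R : ℝ) :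
    circleAverage (fun z => a * f z) c R = a * circleAverage f c R :=
  circleAverage_fun_smul (a := a) (f := f)

theorem inv_conj_mem_ball {b : ℂ} (hb : 1 < ‖b‖) : (conj b)⁻¹ ∈ ball (0 : ℂ) 1 := by
  rw [mem_ball_zero_iff, norm_inv, Complex.norm_conj]
  exact inv_lt_one_of_one_lt₀ hb

theorem setIntegral_ball_add_div_conj_sub_sq {h : ℂ → ℂ} (hh : DifferentiableOn ℂ h (ball 0 1))
    {b : ℂ} (hb : 1 < ‖b‖) (α β : ℂ)
    (hint : IntegrableOn (fun z => α * h z + β * (h z / (conj z - conj b) ^ 2)) (ball 0 1)) :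
    ∫ z in ball (0 : ℂ) 1, (α * h z + β * (h z / (conj z - conj b) ^ 2)) =
      π * (α * h 0 + β * (conj b ^ 2)⁻¹ * h (conj b)⁻¹) := by
  have hw := inv_conj_mem_ball hb
  have hcont : ContinuousOn (fun z => h z / (conj z - conj b) ^ 2) (ball 0 1) := by
    refine hh.continuousOn.div (by fun_prop) fun z hz => pow_ne_zero 2 (sub_ne_zero.2 ?_)
    rw [Ne, (starRingEnd ℂ).injective.eq_iff]
    rintro rfl
    exact (mem_ball_zero_iff.1 hz).not_gt hb
  have hcircle (r : ℝ) (hr : r ∈ Ioo 0 1) :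
      circleAverage (fun z => α * h z + β * (h z / (conj z - conj b) ^ 2)) 0 r =
        α * h 0 + β * (conj b ^ 2)⁻¹ * deriv (fun z => z * h z) (r ^ 2 * (conj b)⁻¹) := by
    have hsphere : sphere (0 : ℂ) r ⊆ ball 0 1 :=
      sphere_subset_closedBall.trans (closedBall_subset_ball hr.2)
    have hDCC : DiffContOnCl ℂ h (ball 0 |r|) := by
      rw [abs_of_pos hr.1]
      exact hh.diffContOnCl_ball (closedBall_subset_ball hr.2)
    have hint₁ : CircleIntegrable (fun z => α * h z) 0 r :=
      (continuousOn_const.mul hh.continuousOn).mono hsphere |>.circleIntegrable hr.1.le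
    have hint₂ : CircleIntegrable (fun z => β * (h z / (conj z - conj b) ^ 2)) 0 r :=
      (continuousOn_const.mul hcont).mono hsphere |>.circleIntegrable hr.1.le
    rw [circleAverage_fun_add hint₁ hint₂,
      circleAverage_const_mul, circleAverage_const_mul,
      hDCC.circleAverage, circleAverage_div_conj_sub_sq isOpen_ball hh
        (closedBall_subset_ball hr.2) hr.1 (hr.2.trans hb)]
    simp only [mul_assoc]
  rw [setIntegral_ball_zero_eq_integral_circleAverage hint,
    setIntegral_congr_fun measurableSet_Ioo fun r hr => congrArg _ (hcircle r hr),
    integral_Ioo_zero_one_smul_deriv_mul_self hh hw]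

theorem hasDerivAt_mul_mul_sub_div_sub (a b c : ℂ) {ζ : ℂ} (hζ : ζ ≠ b) :
    HasDerivAt (fun ζ => c * ζ * (ζ - a) / (ζ - b)) (c * (1 + b * (a - b) / (ζ - b) ^ 2)) ζ := by
  have hζb : ζ - b ≠ 0 := sub_ne_zero.2 hζ
  refine (((hasDerivAt_id' ζ).const_mul c |>.mul ((hasDerivAt_id' ζ).sub_const a)).div
    ((hasDerivAt_id' ζ).sub_const b) hζb).congr_deriv ?_
  simp only [Pi.mul_apply]
  field_simp
  ring

theorem differentiableOn_deriv_mul_mul_sub_div_sub (a b c : ℂ) :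
    DifferentiableOn ℂ (deriv fun ζ => c * ζ * (ζ - a) / (ζ - b)) {b}ᶜ :=
  DifferentiableOn.deriv (fun _ hζ => (hasDerivAt_mul_mul_sub_div_sub a b c hζ).differentiableAt
    |>.differentiableWithinAt) isOpen_compl_singleton

theorem stmt_9_general (a b c : ℂ)
    (hb : 1 < ‖b‖)
    (s : ℂ) (hs : s ^ 2 = 1 - a / b) (hω : b * (1 - s) = 1 / (starRingEnd ℂ) b)
    (f : ℂ → ℂ) (hf : f = fun ζ => c * ζ * (ζ - a) / (ζ - b)) :
    ((‖c‖ : ℂ) ^ 2 *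
        (((starRingEnd ℂ) a - (starRingEnd ℂ) b) *
          (1 - 2 * (‖b‖ : ℂ) ^ 2 + a * (starRingEnd ℂ) b * (‖b‖ : ℂ) ^ 2)) /
        ((starRingEnd ℂ) b * (1 - (‖b‖ : ℂ) ^ 2) ^ 2)) = 0 ∧
    (∀ g : ℂ → ℂ, AnalyticOnNhd ℂ g (ball 0 1) →
      IntegrableOn (fun ζ => g ζ * ((‖deriv f ζ‖ : ℂ)) ^ 2) (ball 0 1) →
      ((π : ℂ)⁻¹ * ∫ ζ in ball (0 : ℂ) 1, g ζ * ((‖deriv f ζ‖ : ℂ)) ^ 2) =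
        (2 * (‖c‖ : ℂ) ^ 2 / (‖b‖ : ℂ) ^ 2 -
          (‖c‖ : ℂ) ^ 2 / (‖b‖ : ℂ) ^ 4) * g 0) := by
  subst hf
  have hb0 : b ≠ 0 := norm_pos_iff.1 (one_pos.trans hb)
  have hbc : conj b ≠ 0 := (map_ne_zero _).2 hb0
  have hcrit : ((conj b)⁻¹ - b) ^ 2 + b * (a - b) = 0 := by
    rw [← one_div, ← hω]
    field_simp at hs
    linear_combination b * hs
  have hrel : 1 - 2 * (b * conj b) + a * conj b * (b * conj b) = 0 := by
    field_simp at hcrit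
    linear_combination hcrit
  have hnorm (z : ℂ) : (‖z‖ : ℂ) ^ 2 = z * conj z := (mul_conj' z).symm
  refine ⟨by rw [hnorm b, hrel, mul_zero, mul_zero, zero_div], fun g hg hint => ?_⟩
  have hball (ζ : ℂ) (hζ : ζ ∈ ball (0 : ℂ) 1) : ζ ≠ b := by
    rintro rfl
    exact (mem_ball_zero_iff.1 hζ).not_gt hb
  set h := fun ζ => g ζ * deriv (fun ζ => c * ζ * (ζ - a) / (ζ - b)) ζ
  have hEq : EqOn (fun ζ => g ζ * (‖deriv (fun ζ => c * ζ * (ζ - a) / (ζ - b)) ζ‖ : ℂ) ^ 2)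
      (fun ζ => conj c * h ζ + conj c * conj (b * (a - b)) * (h ζ / (conj ζ - conj b) ^ 2))
      (ball 0 1) := fun ζ hζ => by
    simp only [h, hnorm, (hasDerivAt_mul_mul_sub_div_sub a b c (hball ζ hζ)).deriv, map_mul,
      map_add, map_one, map_div₀, map_pow, map_sub]
    ring
  have hh : DifferentiableOn ℂ h (ball 0 1) :=
    hg.differentiableOn.mul ((differentiableOn_deriv_mul_mul_sub_div_sub a b c).mono hball)
  rw [setIntegral_congr_fun measurableSet_ball hEq, setIntegral_ball_add_div_conj_sub_sq hh hb _ _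
    (hint.congr_fun hEq measurableSet_ball)]
  have hwb : (conj b)⁻¹ ≠ b := hball _ (inv_conj_mem_ball hb)
  have hb4 : (‖b‖ : ℂ) ^ 4 = (b * conj b) ^ 2 := by rw [← hnorm]; ring
  simp only [h, (hasDerivAt_mul_mul_sub_div_sub a b c hwb).deriv,
    (hasDerivAt_mul_mul_sub_div_sub a b c hb0.symm).deriv,
    one_add_div (pow_ne_zero 2 (sub_ne_zero.2 hwb)), hcrit, zero_div, mul_zero, add_zero]
  rw [hnorm, hnorm, hb4]
  field_simp
  linear_combination (conj c * c * g 0 * b ^ 2) * hrel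

/-- second subcase: for `f(ζ) = cζ(ζ−a)/(ζ−b)` with `0<|a|<1<|b|`, `c ≠ 0`,
if the zero `ω₁ = b(1−√(1−a/b))` of `f'` satisfies `ω₁ = 1/b̄`, then the weight `B`
vanishes and the one-point quadrature identity
`(1/(2πi)) ∫_D g |f'|² dζ̄ dζ = A g(0)` with `A = 2|c|²/|b|² − |c|²/|b|⁴` holds
for every `g` analytic and `|f'|²`-integrable on the unit disk. -/
theorem stmt_9 (a b c : ℂ) (ha : 0 < ‖a‖) (ha1 : ‖a‖ < 1)
    (hb : 1 < ‖b‖) (hc : c ≠ 0)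
    (s : ℂ) (hs : s ^ 2 = 1 - a / b) (hω : b * (1 - s) = 1 / (starRingEnd ℂ) b)
    (f : ℂ → ℂ) (hf : f = fun ζ => c * ζ * (ζ - a) / (ζ - b)) :
    ((‖c‖ : ℂ) ^ 2 *
        (((starRingEnd ℂ) a - (starRingEnd ℂ) b) *
          (1 - 2 * (‖b‖ : ℂ) ^ 2 + a * (starRingEnd ℂ) b * (‖b‖ : ℂ) ^ 2)) /
        ((starRingEnd ℂ) b * (1 - (‖b‖ : ℂ) ^ 2) ^ 2)) = 0 ∧
    (∀ g : ℂ → ℂ, AnalyticOnNhd ℂ g (ball 0 1) →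
      IntegrableOn (fun ζ => g ζ * ((‖deriv f ζ‖ : ℂ)) ^ 2) (ball 0 1) →
      ((π : ℂ)⁻¹ * ∫ ζ in ball (0 : ℂ) 1, g ζ * ((‖deriv f ζ‖ : ℂ)) ^ 2) =
        (2 * (‖c‖ : ℂ) ^ 2 / (‖b‖ : ℂ) ^ 2 -
          (‖c‖ : ℂ) ^ 2 / (‖b‖ : ℂ) ^ 4) * g 0) :=
  stmt_9_general a b c hb s hs hω f hf
end
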